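/- Sure Thing Principle for weight models: for every epistemic weight model M, world w, agent a, and L_CN formulas φ, ψ, the formula B_a(φ,ψ) ∧ B_a(¬φ,ψ) → B_a(⊤,ψ) is true at w. Equivalently: if M,w ⊨ B_a(φ,ψ) and M,w ⊨ B_a(¬φ,ψ) then M,w ⊨ B_a(⊤,ψ). -/

import Mathlib

/-- The language L_CN: `φ ::= ⊤ | p | ¬φ | (φ∧φ) | B_a(φ,φ)`. -/
inductive CNForm (Agt Prp : Type) : Type
  | top : CNForm Agt Prp
  | atom : Prp → CNForm Agt Prp
  | neg : CNForm Agt Prp → CNForm Agt Prp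
  | and : CNForm Agt Prp → CNForm Agt Prp → CNForm Agt Prp
  | bel : Agt → CNForm Agt Prp → CNForm Agt Prp → CNForm Agt Prp

/-- An epistemic weight model `(W, ∼, L, V)`: `W` nonempty countable, `∼_a`
equivalence relations, `L_a : W → ℚ` positive with summable weights on each
knowledge cell, `V` a valuation. -/
structure WeightModel (Agt Prp W : Type) : Type where
  nonempty : Nonempty W
  countable : Countable W
  sim : Agt → W → W → Prop
  equiv : ∀ a, Equivalence (sim a)
  wt : Agt → W → ℚ
  wt_pos : ∀ a w, 0 < wt a w
  wt_summable : ∀ a w, Summable (fun u : {v // sim a w v} => ((wt a u.1 : ℚ) : ℝ))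
  V : Prp → Set W

/-- Truth of an L_CN formula in an epistemic weight model:
`B_a(φ,ψ)` holds at `w` iff the total weight of `[w]_a ∩ ⟦φ∧ψ⟧` strictly
exceeds the total weight of `[w]_a ∩ ⟦φ∧¬ψ⟧`. -/
def WeightModel.truth {Agt Prp W : Type} (M : WeightModel Agt Prp W) :
    CNForm Agt Prp → W → Prop
  | .top, _ => True
  | .atom p, w => w ∈ M.V p
  | .neg φ, w => ¬ M.truth φ w
  | .and φ ψ, w => M.truth φ w ∧ M.truth ψ w
  | .bel a φ ψ, w =>
      (∑' u : {v // M.sim a w v ∧ M.truth φ v ∧ M.truth ψ v}, ((M.wt a u.1 : ℚ) : ℝ)) >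
      (∑' u : {v // M.sim a w v ∧ M.truth φ v ∧ ¬ M.truth ψ v}, ((M.wt a u.1 : ℚ) : ℝ))

theorem Summable.tsum_subtype_and_eq_add {α G : Type*} [AddCommGroup G] [UniformSpace G]
    [IsUniformAddGroup G] [CompleteSpace G] [T2Space G] {f : α → G} {p : α → Prop}
    (hf : Summable fun x : {x // p x} => f x) (q r : α → Prop) :
    ∑' x : {x // p x ∧ r x}, f x =
      ∑' x : {x // p x ∧ q x ∧ r x}, f x + ∑' x : {x // p x ∧ ¬ q x ∧ r x}, f x := by
  have summable_of_imp : ∀ s : α → Prop, (∀ x, s x → p x) → Summable fun x : {x // s x} => f x :=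
    fun s hs => hf.comp_injective (Subtype.impEmbedding s p hs).injective
  have hsplit : {x | p x ∧ r x} = {x | p x ∧ q x ∧ r x} ∪ {x | p x ∧ ¬ q x ∧ r x} := by
    ext x
    by_cases hq : q x <;> simp [hq]
  have hdisj : Disjoint {x | p x ∧ q x ∧ r x} {x | p x ∧ ¬ q x ∧ r x} :=
    Set.disjoint_left.mpr fun _ hq hnq => hnq.2.1 hq.2.1
  calc ∑' x : {x // p x ∧ r x}, f x
      = ∑' x : ↥({x | p x ∧ q x ∧ r x} ∪ {x | p x ∧ ¬ q x ∧ r x}), f x :=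
        tsum_congr_set_coe f hsplit
    _ = _ := Summable.tsum_union_disjoint hdisj (summable_of_imp _ fun _ h => h.1)
        (summable_of_imp _ fun _ h => h.1)

/-- Sure Thing Principle for epistemic weight models:
if `M,w ⊨ B_a(φ,ψ)` and `M,w ⊨ B_a(¬φ,ψ)` then `M,w ⊨ B_a(⊤,ψ)`. -/
theorem weight_sure_thing {Agt Prp W : Type} (M : WeightModel Agt Prp W)
    (w : W) (a : Agt) (φ ψ : CNForm Agt Prp)
    (h1 : M.truth (.bel a φ ψ) w) (h2 : M.truth (.bel a (.neg φ) ψ) w) :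
    M.truth (.bel a .top ψ) w := by
  have split := Summable.tsum_subtype_and_eq_add (f := fun v => ((M.wt a v : ℚ) : ℝ))
    (M.wt_summable a w) (M.truth φ)
  have drop_true : ∀ r : W → Prop, ∑' u : {v // M.sim a w v ∧ True ∧ r v}, ((M.wt a u : ℚ) : ℝ) =
      ∑' u : {v // M.sim a w v ∧ r v}, ((M.wt a u : ℚ) : ℝ) :=
    fun _ => tsum_congr_set_coe (fun v => ((M.wt a v : ℚ) : ℝ)) (by ext; simp)
  simp only [WeightModel.truth] at h1 h2 ⊢
  rw [drop_true, drop_true, split (M.truth ψ), split fun v => ¬ M.truth ψ v]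
  exact add_lt_add h1 h2
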